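/- Let v ∈ ℕ with p-adic digits a_i(v) and leading digit position j := j(v), and let w ∈ C_v. Then the p-adic digits of w agree with those of v in all positions i with 1 ≤ i < j, i.e. a_i(w) = a_i(v) for all 1 ≤ i < j. -/

import Mathlib

/-!
Along a generating step `x ∼ y` of `∼_{D_v}` with `k ∈ D_x ∖ D_v`, the hull of `{k}` runs from
`k` up to just below the next nonzero digit, so all other reflected digits vanish and
`y = x - 2 a_k(x) p^k`: the digits below `k` are unchanged and `a_k(y) = p - a_k(x) ≠ 0`.
Hence if either end agrees with `v` below `j(v)`, then `k ≥ j(v)` (otherwise `k ∈ D_v`), and the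
other end agrees with `v` there too. Agreement with `v` below `j(v)` is therefore constant on `C_v`.
-/

open scoped Classical

namespace SL2

/-- the `i`-th digit of `v` in base `p`. -/
def digit (p v i : ℕ) : ℕ := v / p ^ i % p

/-- position of the leading (highest nonzero) digit of `v ≥ 1`. -/
def lead (p v : ℕ) : ℕ := Nat.log p v

/-- a nonempty set of consecutive integers -/
def IsStretch (S : Finset ℕ) : Prop :=
  S.Nonempty ∧ ∀ a ∈ S, ∀ b ∈ S, ∀ c, a ≤ c → c ≤ b → c ∈ S

/-- `S` is down-admissible for `v`. -/
def DownAdm (p v : ℕ) (S : Finset ℕ) : Prop :=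
  (∀ s ∈ S, (s = 0 ∨ s - 1 ∉ S) → digit p v s ≠ 0) ∧
  (∀ s ∈ S, digit p v (s + 1) = 0 → s + 1 ∈ S)

/-- `S` is up-admissible for `v`. -/
def UpAdm (p v : ℕ) (S : Finset ℕ) : Prop :=
  (∀ s ∈ S, (s = 0 ∨ s - 1 ∉ S) → digit p v s ≠ 0) ∧
  (∀ s ∈ S, digit p v (s + 1) = p - 1 → s + 1 ∈ S)

/-- the downward reflection `v[S]`. -/
def reflDown (p v : ℕ) (S : Finset ℕ) : ℕ :=
  (∑ i ∈ Finset.range (lead p v + 1),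
    (if i ∈ S then -((digit p v i : ℤ) * p ^ i) else ((digit p v i : ℤ) * p ^ i))).toNat

/-- the upward reflection `v(S)`. -/
def reflUp (p v : ℕ) (S : Finset ℕ) : ℕ :=
  (∑ i ∈ Finset.range (lead p v + 2),
    (if i ∈ S then -((digit p v i : ℤ) * p ^ i)
     else if i - 1 ∈ S ∧ 1 ≤ i then ((digit p v i : ℤ) + 2) * p ^ i
     else (digit p v i : ℤ) * p ^ i)).toNat

/-- `T` is the down-admissible hull of `S` for `v`. -/
def IsHull (p v : ℕ) (S T : Finset ℕ) : Prop :=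
  DownAdm p v T ∧ S ⊆ T ∧ ∀ T', DownAdm p v T' → S ⊆ T' → T ⊆ T'

noncomputable def hull (p v : ℕ) (S : Finset ℕ) : Finset ℕ :=
  if h : ∃ T, IsHull p v S T then h.choose else ∅

/-- `v[⟨i⟩]`, the downward reflection of `v` along the down-admissible hull of `{i}`. -/
noncomputable def reflDownHull (p v i : ℕ) : ℕ := reflDown p v (hull p v {i})

/-- `D_v`, the set of positions of nonzero non-leading digits of `v`. -/
def Dset (p v : ℕ) : Finset ℕ :=
  (Finset.range (lead p v)).filter (fun i => digit p v i ≠ 0)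

/-- one step of the relation generating `∼_S`. -/
noncomputable def SimStep (p : ℕ) (S : Finset ℕ) (v w : ℕ) : Prop :=
  v ≠ w ∧ S ⊆ Dset p v ∧ S ⊆ Dset p w ∧
    ∃ k ∈ Dset p v, k ∉ S ∧ w = reflDownHull p v k

/-- the equivalence relation `∼_S`. -/
noncomputable def Sim (p : ℕ) (S : Finset ℕ) (v w : ℕ) : Prop :=
  Relation.EqvGen (SimStep p S) v w

/-- the set `C_v`. -/
noncomputable def Cset (p v : ℕ) : Set ℕ := {w | 1 ≤ w ∧ Sim p (Dset p v) v w}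

/-- minimal down-admissible stretch for `v`. -/
def MinDownStretch (p v : ℕ) (S : Finset ℕ) : Prop :=
  DownAdm p v S ∧ IsStretch S ∧
    ∀ T ⊆ S, DownAdm p v T → IsStretch T → T = S

/-- minimal up-admissible stretch for `v`. -/
def MinUpStretch (p v : ℕ) (S : Finset ℕ) : Prop :=
  UpAdm p v S ∧ IsStretch S ∧
    ∀ T ⊆ S, UpAdm p v T → IsStretch T → T = S

/-- adjacency in the graph underlying the quiver algebra. -/
def BlockAdj (p : ℕ) (v w : ℕ) : Prop :=
  (1 ≤ v ∧ 1 ≤ w) ∧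
    ((∃ S, MinDownStretch p v S ∧ w = reflDown p v S) ∨
     (∃ S, MinDownStretch p w S ∧ v = reflDown p w S))

/-- the block `⟨e⟩_p`: the connected component of `e`. -/
def block (p e : ℕ) : Set ℕ := {v | 1 ≤ v ∧ Relation.ReflTransGen (BlockAdj p) e v}

/-- `e` is an eve: exactly one nonzero `p`-adic digit. -/
def IsEve (p e : ℕ) : Prop := 1 ≤ e ∧ Dset p e = ∅

variable {p : ℕ}

lemma digit_lt (hp : 1 < p) (v i : ℕ) : digit p v i < p :=
  Nat.mod_lt _ (by omega)

lemma pow_le_of_digit_ne_zero {v i : ℕ} (h : digit p v i ≠ 0) : p ^ i ≤ v := by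
  by_contra! hlt
  exact h (by simp [digit, Nat.div_eq_of_lt hlt])

lemma pow_succ_le_of_lt_lead {x k : ℕ} (hk : k < lead p x) : p ^ (k + 1) ≤ x := by
  have hx : x ≠ 0 := by rintro rfl; simp [lead] at hk
  exact Nat.pow_le_of_le_log hx hk

lemma le_lead_of_digit_ne_zero (hp : 1 < p) {v i : ℕ} (h : digit p v i ≠ 0) : i ≤ lead p v := by
  have hv : v ≠ 0 := by rintro rfl; simp [digit] at h
  exact (Nat.le_log_iff_pow_le hp hv).mpr (pow_le_of_digit_ne_zero h)

lemma digit_lead_ne_zero (hp : 1 < p) {v : ℕ} (hv : v ≠ 0) : digit p v (lead p v) ≠ 0 := by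
  have hpos : 0 < p ^ lead p v := Nat.pow_pos (by omega)
  have hlt : v / p ^ lead p v < p := by
    rw [Nat.div_lt_iff_lt_mul hpos, ← pow_succ']
    exact Nat.lt_pow_succ_log_self hp v
  have hge : 1 ≤ v / p ^ lead p v :=
    (Nat.one_le_div_iff hpos).mpr (Nat.pow_log_le_self p hv)
  rw [digit, Nat.mod_eq_of_lt hlt]
  omega

lemma sum_digit_mul_pow (v n : ℕ) : ∑ i ∈ Finset.range n, digit p v i * p ^ i = v % p ^ n := by
  induction n with
  | zero => simp [Nat.mod_one]
  | succ n ih =>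
    rw [Finset.sum_range_succ, ih, Nat.mod_pow_succ, digit]
    ring

lemma digit_eq_of_mod_pow_eq {x y k j : ℕ} (h : x % p ^ k = y % p ^ k) (hj : j < k) :
    digit p x j = digit p y j := by
  have hdvd : p ^ (j + 1) ∣ p ^ k := pow_dvd_pow p hj
  simp only [digit, ← Nat.mod_mul_right_div_self, ← pow_succ, ← Nat.mod_mod_of_dvd x hdvd,
    ← Nat.mod_mod_of_dvd y hdvd, h]

lemma digit_sub_mul_pow_of_lt {x c k j : ℕ} (h : c * p ^ k ≤ x) (hj : j < k) :
    digit p (x - c * p ^ k) j = digit p x j := by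
  rw [mul_comm] at h ⊢
  exact digit_eq_of_mod_pow_eq (Nat.sub_mul_mod h) hj

lemma hull_eq_of_isHull {v : ℕ} {S T : Finset ℕ} (h : IsHull p v S T) : hull p v S = T := by
  have hex : ∃ T, IsHull p v S T := ⟨T, h⟩
  rw [hull, dif_pos hex]
  exact (hex.choose_spec.2.2 T h.1 h.2.1).antisymm (h.2.2 _ hex.choose_spec.1 hex.choose_spec.2.1)

lemma exists_next_digit_ne_zero (hp : 1 < p) {x k : ℕ} (hk : k < lead p x) :
    ∃ t, k < t ∧ digit p x t ≠ 0 ∧ ∀ m, k < m → m < t → digit p x m = 0 := by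
  have hx : x ≠ 0 := by rintro rfl; simp [lead] at hk
  have hex : ∃ m, k < m ∧ digit p x m ≠ 0 := ⟨lead p x, hk, digit_lead_ne_zero hp hx⟩
  refine ⟨Nat.find hex, (Nat.find_spec hex).1, (Nat.find_spec hex).2, fun m hkm hmt => ?_⟩
  by_contra hm
  exact Nat.find_min hex hmt ⟨hkm, hm⟩

lemma hull_singleton_eq_Ico {x k t : ℕ} (hk : digit p x k ≠ 0) (hkt : k < t)
    (ht : digit p x t ≠ 0) (hgap : ∀ m, k < m → m < t → digit p x m = 0) :
    hull p x {k} = Finset.Ico k t := by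
  have hadm : DownAdm p x (Finset.Ico k t) := by
    refine ⟨fun s hs hmin => ?_, fun s hs hs0 => ?_⟩
    · simp only [Finset.mem_Ico] at hs hmin
      obtain rfl : s = k := by omega
      exact hk
    · simp only [Finset.mem_Ico] at hs ⊢
      rcases (show s + 1 < t ∨ s + 1 = t by omega) with hlt | rfl
      · omega
      · exact absurd hs0 ht
  have hmin : ∀ T, DownAdm p x T → k ∈ T → Finset.Ico k t ⊆ T := by
    intro T hT hkT m hm
    rw [Finset.mem_Ico] at hm
    obtain ⟨hkm, hmt⟩ := hm
    induction m, hkm using Nat.le_induction with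
    | base => exact hkT
    | succ m hkm ih => exact hT.2 m (ih (by omega)) (hgap _ (by omega) hmt)
  exact hull_eq_of_isHull
    ⟨hadm, by simpa using hkt, fun T hT hkT => hmin T hT (hkT (Finset.mem_singleton_self k))⟩

lemma reflDown_eq_toNat (hp : 1 < p) {v : ℕ} {S : Finset ℕ}
    (hS : S ⊆ Finset.range (lead p v + 1)) :
    reflDown p v S = ((v : ℤ) - 2 * ∑ i ∈ S, (digit p v i : ℤ) * p ^ i).toNat := by
  have hv : ∑ i ∈ Finset.range (lead p v + 1), (digit p v i : ℤ) * p ^ i = v := by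
    have hlt : v < p ^ (lead p v + 1) := Nat.lt_pow_succ_log_self hp v
    have h := sum_digit_mul_pow (p := p) v (lead p v + 1)
    rw [Nat.mod_eq_of_lt hlt] at h
    exact_mod_cast h
  have hsplit : ∀ i, (if i ∈ S then -((digit p v i : ℤ) * p ^ i) else (digit p v i : ℤ) * p ^ i)
      = (digit p v i : ℤ) * p ^ i - 2 * (if i ∈ S then (digit p v i : ℤ) * p ^ i else 0) := by
    intro i
    split_ifs <;> ring
  simp only [reflDown, hsplit, Finset.sum_sub_distrib, ← Finset.mul_sum, Finset.sum_ite_mem,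
    Finset.inter_eq_right.mpr hS, hv]

lemma two_mul_digit_mul_pow_le (hp : 1 < p) {x k : ℕ} (hx : p ^ (k + 1) ≤ x) :
    2 * digit p x k * p ^ k ≤ x := by
  have hdiv : x = p ^ (k + 1) * (x / p ^ (k + 1)) + x % p ^ (k + 1) := (Nat.div_add_mod _ _).symm
  have hquot : 1 ≤ x / p ^ (k + 1) := (Nat.one_le_div_iff (Nat.pow_pos (by omega))).mpr hx
  have hrem : digit p x k * p ^ k ≤ x % p ^ (k + 1) := by
    rw [Nat.mod_pow_succ, mul_comm]
    exact Nat.le_add_left _ _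
  have hdigit : digit p x k * p ^ k ≤ p ^ (k + 1) := by
    rw [pow_succ']
    exact Nat.mul_le_mul_right _ (digit_lt hp x k).le
  nlinarith

lemma reflDownHull_eq (hp : 1 < p) {x k : ℕ} (hk : digit p x k ≠ 0) (hkl : k < lead p x) :
    reflDownHull p x k = x - 2 * digit p x k * p ^ k := by
  obtain ⟨t, hkt, ht, hgap⟩ := exists_next_digit_ne_zero hp hkl
  have hIco : Finset.Ico k t ⊆ Finset.range (lead p x + 1) := fun i hi => by
    have := le_lead_of_digit_ne_zero hp ht
    simp only [Finset.mem_Ico, Finset.mem_range] at hi ⊢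
    omega
  have hsum : ∑ i ∈ Finset.Ico k t, (digit p x i : ℤ) * p ^ i = digit p x k * p ^ k := by
    refine Finset.sum_eq_single_of_mem k (by simpa using hkt) fun i hi hik => ?_
    rw [Finset.mem_Ico] at hi
    simp [hgap i (by omega) hi.2]
  have hle := two_mul_digit_mul_pow_le hp (pow_succ_le_of_lt_lead hkl)
  have hcast : ((x - 2 * digit p x k * p ^ k : ℕ) : ℤ) = x - 2 * (digit p x k * p ^ k) := by
    push_cast [hle]
    ring
  rw [reflDownHull, hull_singleton_eq_Ico hk hkt ht hgap, reflDown_eq_toNat hp hIco, hsum, ← hcast,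
    Int.toNat_natCast]

lemma digit_reflDownHull_of_lt (hp : 1 < p) {x k j : ℕ} (hk : digit p x k ≠ 0)
    (hkl : k < lead p x) (hj : j < k) : digit p (reflDownHull p x k) j = digit p x j := by
  have hle := two_mul_digit_mul_pow_le hp (pow_succ_le_of_lt_lead hkl)
  rw [reflDownHull_eq hp hk hkl]
  exact digit_sub_mul_pow_of_lt hle hj

lemma digit_reflDownHull_self (hp : 1 < p) {x k : ℕ} (hk : digit p x k ≠ 0)
    (hkl : k < lead p x) : digit p (reflDownHull p x k) k = p - digit p x k := by
  have hx := pow_succ_le_of_lt_lead hkl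
  have hd := digit_lt hp x k
  have hquot : 1 ≤ x / p ^ (k + 1) := (Nat.one_le_div_iff (Nat.pow_pos (by omega))).mpr hx
  have hshift : x / p ^ k = p * (x / p ^ (k + 1)) + digit p x k := by
    rw [digit, pow_succ, ← Nat.div_div_eq_div_mul, Nat.div_add_mod]
  have hsub : (x - 2 * digit p x k * p ^ k) / p ^ k = x / p ^ k - 2 * digit p x k := by
    rw [mul_comm _ (p ^ k), Nat.sub_mul_div]
  rw [reflDownHull_eq hp hk hkl, digit, hsub, hshift,
    show p * (x / p ^ (k + 1)) + digit p x k - 2 * digit p x k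
      = (p - digit p x k) + p * (x / p ^ (k + 1) - 1) by
      have := Nat.mul_le_mul_left p hquot
      rw [Nat.mul_sub_one]; omega,
    Nat.add_mul_mod_self_left, Nat.mod_eq_of_lt (by omega)]

lemma agree_below_lead_iff_of_simStep (hp : 1 < p) {v x y : ℕ} (h : SimStep p (Dset p v) x y) :
    (∀ j < lead p v, digit p x j = digit p v j) ↔ (∀ j < lead p v, digit p y j = digit p v j) := by
  obtain ⟨-, -, -, k, hkx, hkv, rfl⟩ := h
  simp only [Dset, Finset.mem_filter, Finset.mem_range] at hkx hkv
  obtain ⟨hkl, hk⟩ := hkx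
  have hlead : ∀ z, digit p z k ≠ 0 → (∀ j < lead p v, digit p z j = digit p v j) →
      lead p v ≤ k := fun z hz hzv => by
    by_contra! hlt
    exact hkv ⟨hlt, hzv k hlt ▸ hz⟩
  have hflip : digit p (reflDownHull p x k) k ≠ 0 := by
    rw [digit_reflDownHull_self hp hk hkl]
    have := digit_lt hp x k
    omega
  constructor
  · intro hxv j hj
    rw [digit_reflDownHull_of_lt hp hk hkl (by have := hlead x hk hxv; omega)]
    exact hxv j hj
  · intro hyv j hj
    rw [← digit_reflDownHull_of_lt hp hk hkl (by have := hlead _ hflip hyv; omega)]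
    exact hyv j hj

end SL2

theorem SL2.stmt0_general (p : ℕ) (hp : p.Prime) (v : ℕ)
    (w : ℕ) (hw : w ∈ SL2.Cset p v) (i : ℕ) (hi2 : i < SL2.lead p v) :
    SL2.digit p w i = SL2.digit p v i := by
  have hiff : Equivalence fun x y : ℕ =>
      (∀ j < SL2.lead p v, SL2.digit p x j = SL2.digit p v j) ↔
        (∀ j < SL2.lead p v, SL2.digit p y j = SL2.digit p v j) :=
    ⟨fun _ => Iff.rfl, Iff.symm, Iff.trans⟩
  have hagree := (hiff.eqvGen_iff.mp <| Relation.EqvGen.mono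
    (fun _ _ => SL2.agree_below_lead_iff_of_simStep hp.one_lt) _ _ hw.2).mp fun _ _ => rfl
  exact hagree i hi2

/-- If `w ∈ C_v`, then the `p`-adic digits of `w` agree with those of `v`
in all positions `i` with `1 ≤ i < j(v)`. -/
theorem SL2.stmt0 (p : ℕ) (hp : p.Prime) (v : ℕ) (hv : 1 ≤ v)
    (w : ℕ) (hw : w ∈ SL2.Cset p v) (i : ℕ) (hi1 : 1 ≤ i) (hi2 : i < SL2.lead p v) :
    SL2.digit p w i = SL2.digit p v i :=
  SL2.stmt0_general p hp v w hw i hi2
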